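/- Assume 1 ≤ q ≤ 4 and r ≥ 1, and let σ be a nonempty subset of N^r_q. The following are equivalent: (1) σ is a Scarf face of E_q^r; (2) for all a, b ∈ σ the set {a, b} is a Scarf face of E_q^r; (3) |a_i − b_i| ≤ 1 for all i ∈ [q] and all a, b ∈ σ; (4) σ ⊆ cU, where c ∈ ℕ^q is defined by c_i = min_{a∈σ} a_i (the exponent vector of the ε-gcd of σ). -/

import Mathlib

/-!
Inside a box `cU` a vector of `N^r_q` is determined by the set where it exceeds `c`, and the
label recovers both the box (through its values at `{i}` and `[q] ∖ {i}`) and that set, so every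
nonempty subset of a box is a Scarf face; Scarf faces are also closed under nonempty subsets.
Conversely, if `a i ≥ b i + 2`, let `v = a - b`. For `q ≤ 4` there are sets `S ⊆ {v > 0}` and
`T ⊆ {v < 0}` of equal size such that `w = 1_S - 1_T` has, on every `A`, a sum between `0` and
`∑_A v`. Then `d = b + w` is a third point of `N^r_q` with `ε^d ∣ lcm(ε^a, ε^b)`, so `{a, b}` is
not a Scarf face.
-/

open Finset

/-- The exponent of the variable `x_A` in `lcm(ε^a : a ∈ σ)`:
`eLabel σ A = max_{a ∈ σ} ∑_{i ∈ A} a i` (and `0` if `σ = ∅`). -/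
def eLabel {q : ℕ} (σ : Finset (Fin q → ℕ)) (A : Finset (Fin q)) : ℕ :=
  σ.sup (fun a => ∑ i ∈ A, a i)

/-- `σ` is a face of the Scarf complex of `E_q^r`: a nonempty subset of
`N^r_q` such that every nonempty `τ ⊆ N^r_q` with the same label equals `σ`. -/
def IsScarf (q r : ℕ) (σ : Finset (Fin q → ℕ)) : Prop :=
  σ.Nonempty ∧ (∀ a ∈ σ, ∑ i, a i = r) ∧
    ∀ τ : Finset (Fin q → ℕ), τ.Nonempty → (∀ a ∈ τ, ∑ i, a i = r) →
      (∀ A : Finset (Fin q), A.Nonempty → eLabel τ A = eLabel σ A) → τ = σ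

/-- The set `aU = {c ∈ N^r_q : a i ≤ c i ≤ a i + 1 for all i}`, i.e. the
vertex set of the face `ε^a · U_q^{r-|a|}` of the Taylor complex of `E_q^r`. -/
def aUF (q r : ℕ) (a : Fin q → ℕ) : Finset (Fin q → ℕ) :=
  (Finset.Icc a (a + 1)).filter (fun c => ∑ i, c i = r)

section SignStep

variable {ι : Type*} [DecidableEq ι]

def signStep (S T : Finset ι) (k : ι) : ℤ :=
  (if k ∈ S then 1 else 0) - (if k ∈ T then 1 else 0)

lemma sum_signStep (S T A : Finset ι) :
    ∑ k ∈ A, signStep S T k = #(A ∩ S) - #(A ∩ T) := by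
  simp [signStep, sum_sub_distrib]

lemma signStep_le_one (S T : Finset ι) (k : ι) : signStep S T k ≤ 1 := by
  unfold signStep; split_ifs <;> norm_num

/-- Sufficient conditions for `signStep S T` to lie between `0` and `v` on every subset
(`IsSignStep.sum_mem_uIcc`). -/
structure IsSignStep (v : ι → ℤ) (S T : Finset ι) : Prop where
  card_eq : #S = #T
  pos : ∀ k ∈ S, 0 < v k
  neg : ∀ k ∈ T, v k < 0
  separates : ∀ A : Finset ι, #(A ∩ T) < #(A ∩ S) → (∀ k ∈ A, 0 ≤ v k) ∨ ∀ k ∉ A, v k ≤ 0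

lemma IsSignStep.signStep_ne_zero {v : ι → ℤ} {S T : Finset ι} (h : IsSignStep v S T)
    (hS : S.Nonempty) : signStep S T ≠ 0 := by
  obtain ⟨s, hs⟩ := hS
  have hsT : s ∉ T := fun hsT => lt_asymm (h.pos s hs) (h.neg s hsT)
  intro h0
  simpa [signStep, hs, hsT] using congrFun h0 s

/-- Because `∑ v = ∑ w = 0`, the upper bound on `Aᶜ` is the lower bound on `A`. -/
lemma sum_mem_uIcc_of_le_max [Fintype ι] {v w : ι → ℤ} (hv : ∑ k, v k = 0)
    (hw : ∑ k, w k = 0) (h : ∀ A : Finset ι, ∑ k ∈ A, w k ≤ max 0 (∑ k ∈ A, v k))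
    (A : Finset ι) : ∑ k ∈ A, w k ∈ Set.uIcc 0 (∑ k ∈ A, v k) := by
  have hA := h A
  have hAc := h Aᶜ
  have hvA := sum_compl_add_sum A v
  have hwA := sum_compl_add_sum A w
  rw [Set.mem_uIcc]
  omega

lemma card_inter_le_sum {v : ι → ℤ} {S A : Finset ι} (hS : ∀ k ∈ S, 0 < v k)
    (hA : ∀ k ∈ A, 0 ≤ v k) : (#(A ∩ S) : ℤ) ≤ ∑ k ∈ A, v k :=
  calc (#(A ∩ S) : ℤ) = ∑ _k ∈ A ∩ S, 1 := by simp
    _ ≤ ∑ k ∈ A ∩ S, v k := sum_le_sum fun k hk => hS k (mem_inter.1 hk).2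
    _ ≤ ∑ k ∈ A, v k := sum_le_sum_of_subset_of_nonneg inter_subset_left
        fun k hk _ => hA k hk

lemma card_sdiff_le_sum [Fintype ι] {v : ι → ℤ} {T A : Finset ι} (hv : ∑ k, v k = 0)
    (hT : ∀ k ∈ T, v k < 0) (hA : ∀ k ∉ A, v k ≤ 0) : (#(T \ A) : ℤ) ≤ ∑ k ∈ A, v k := by
  have h := card_inter_le_sum (v := -v) (S := T) (A := Aᶜ) (by simpa using hT)
    (fun k hk => by simpa using hA k (mem_compl.1 hk))
  have hsplit := sum_compl_add_sum A v
  rw [inter_comm, ← sdiff_eq_inter_compl] at h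
  simp only [Pi.neg_apply, sum_neg_distrib] at h
  omega

lemma IsSignStep.sum_mem_uIcc [Fintype ι] {v : ι → ℤ} {S T : Finset ι}
    (h : IsSignStep v S T) (hv : ∑ k, v k = 0) (A : Finset ι) :
    ∑ k ∈ A, signStep S T k ∈ Set.uIcc 0 (∑ k ∈ A, v k) := by
  refine sum_mem_uIcc_of_le_max hv (by simp [sum_signStep, h.card_eq]) (fun A => ?_) A
  rw [sum_signStep]
  by_cases hlt : #(A ∩ T) < #(A ∩ S)
  · rcases h.separates A hlt with hA | hA
    · have := card_inter_le_sum h.pos hA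
      omega
    · have hsum := card_sdiff_le_sum hv h.neg hA
      have hT := card_inter_add_card_sdiff T A
      have hS := card_le_card (inter_subset_right : A ∩ S ⊆ S)
      rw [inter_comm] at hT
      have := h.card_eq
      omega
  · omega

lemma isSignStep_singleton {v : ι → ℤ} {i j : ι} (hi : 0 < v i) (hj : v j < 0)
    (h : (∀ k ≠ j, 0 ≤ v k) ∨ ∀ k ≠ i, v k ≤ 0) : IsSignStep v {i} {j} := by
  refine ⟨rfl, by simpa using hi, by simpa using hj, fun A hA => ?_⟩
  have hiA : i ∈ A ∧ j ∉ A := by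
    by_contra! h
    by_cases hiA : i ∈ A
    · simp [inter_singleton_of_mem hiA, inter_singleton_of_mem (h hiA)] at hA
    · simp [inter_singleton_of_notMem hiA] at hA
  exact h.imp (fun h k hk => h k (ne_of_mem_of_not_mem hk hiA.2))
    (fun h k hk => h k (ne_of_mem_of_not_mem hiA.1 hk).symm)

lemma isSignStep_supports [Fintype ι] {v : ι → ℤ} (hP : #(univ.filter (0 < v ·)) = 2)
    (hM : #(univ.filter (v · < 0)) = 2) :
    IsSignStep v (univ.filter (0 < v ·)) (univ.filter (v · < 0)) := by
  refine ⟨hP.trans hM.symm, by simp, by simp, fun A hA => ?_⟩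
  rcases Nat.eq_zero_or_pos #(A ∩ univ.filter (v · < 0)) with hAM | hAM
  · left
    intro k hk
    by_contra! hk'
    exact notMem_empty k (card_eq_zero.1 hAM ▸ mem_inter.2 ⟨hk, by simpa using hk'⟩)
  · right
    have hPA := inter_eq_right.1 <| eq_of_subset_of_card_le
      (inter_subset_right (s₁ := A) (s₂ := univ.filter (0 < v ·))) (by omega)
    intro k hk
    by_contra! hk'
    exact hk (hPA (by simpa using hk'))

lemma exists_isSignStep_of_card_le_four [Fintype ι] (hι : Fintype.card ι ≤ 4) {v : ι → ℤ}
    (hv : ∑ k, v k = 0) {i : ι} (hi : 0 < v i) :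
    ∃ S T : Finset ι, S.Nonempty ∧ IsSignStep v S T := by
  set P := univ.filter (0 < v ·)
  set M := univ.filter (v · < 0)
  have hP : i ∈ P := by simpa [P] using hi
  have hM : M.Nonempty := by
    by_contra! hM
    have hnonneg : ∀ k ∈ univ, 0 ≤ v k := fun k _ => by
      by_contra! hk
      exact notMem_empty k (hM ▸ mem_filter.2 ⟨mem_univ k, hk⟩)
    have := single_le_sum hnonneg (mem_univ i)
    omega
  rcases hM.exists_eq_singleton_or_nontrivial with ⟨j, hMj⟩ | hMnt
  · have hj : j ∈ M := hMj ▸ mem_singleton_self j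
    refine ⟨{i}, {j}, singleton_nonempty i, isSignStep_singleton hi (by simpa [M] using hj)
      (Or.inl fun k hk => ?_)⟩
    have : k ∉ M := by rw [hMj, mem_singleton]; exact hk
    simpa [M] using this
  rcases (show P.Nonempty from ⟨i, hP⟩).exists_eq_singleton_or_nontrivial with ⟨i', hPi⟩ | hPnt
  · obtain rfl : i = i' := mem_singleton.1 (hPi ▸ hP)
    obtain ⟨j, hj⟩ := hM
    refine ⟨{i}, {j}, singleton_nonempty i, isSignStep_singleton hi (by simpa [M] using hj)
      (Or.inr fun k hk => ?_)⟩
    have : k ∉ P := by rw [hPi, mem_singleton]; exact hk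
    simpa [P] using this
  have hPM : Disjoint P M := disjoint_filter.2 fun _ _ h h' => lt_irrefl _ (h'.trans h)
  have h1 := one_lt_card_iff_nontrivial.2 hPnt
  have h2 := one_lt_card_iff_nontrivial.2 hMnt
  have h3 := card_union_of_disjoint hPM ▸ card_le_univ (P ∪ M)
  exact ⟨P, M, ⟨i, hP⟩, isSignStep_supports (show #P = 2 by omega) (show #M = 2 by omega)⟩

lemma exists_sum_mem_uIcc_of_card_le_four [Fintype ι] (hι : Fintype.card ι ≤ 4) {v : ι → ℤ}
    (hv : ∑ k, v k = 0) {i : ι} (hi : 2 ≤ v i) :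
    ∃ w : ι → ℤ, w ≠ 0 ∧ w ≠ v ∧ ∀ A : Finset ι, ∑ k ∈ A, w k ∈ Set.uIcc 0 (∑ k ∈ A, v k) := by
  obtain ⟨S, T, hS, h⟩ := exists_isSignStep_of_card_le_four hι hv (i := i) (by omega)
  refine ⟨signStep S T, h.signStep_ne_zero hS, fun hw => ?_, h.sum_mem_uIcc hv⟩
  have := signStep_le_one S T i
  rw [hw] at this
  omega

end SignStep

lemma eq_of_le_on_of_le_off {ι M : Type*} [Fintype ι] [DecidableEq ι] [AddCommMonoid M]
    [PartialOrder M] [IsOrderedCancelAddMonoid M] {s : Finset ι} {x y : ι → M}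
    (hs : ∀ i ∈ s, x i ≤ y i) (hsc : ∀ i ∉ s, y i ≤ x i)
    (hsum : ∑ i, x i = ∑ i, y i) (h : ∑ i ∈ s, y i ≤ ∑ i ∈ s, x i) : x = y := by
  have hon := (sum_eq_sum_iff_of_le hs).1 (le_antisymm (sum_le_sum hs) h)
  have hoff : ∑ i ∈ sᶜ, y i = ∑ i ∈ sᶜ, x i := by
    rw [← sum_add_sum_compl s x, ← sum_add_sum_compl s y, sum_congr rfl hon] at hsum
    exact (add_left_cancel hsum).symm
  have hoff' := (sum_eq_sum_iff_of_le fun i hi => hsc i (mem_compl.1 hi)).1 hoff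
  funext i
  by_cases hi : i ∈ s
  · exact hon i hi
  · exact (hoff' i (mem_compl.2 hi)).symm

section Scarf

variable {q r : ℕ}

lemma sum_le_eLabel {σ : Finset (Fin q → ℕ)} {a : Fin q → ℕ} (ha : a ∈ σ) (A : Finset (Fin q)) :
    ∑ i ∈ A, a i ≤ eLabel σ A :=
  le_sup (f := fun a => ∑ i ∈ A, a i) ha

lemma eLabel_insert (a : Fin q → ℕ) (σ : Finset (Fin q → ℕ)) (A : Finset (Fin q)) :
    eLabel (insert a σ) A = (∑ i ∈ A, a i) ⊔ eLabel σ A :=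
  sup_insert

lemma eLabel_union (σ τ : Finset (Fin q → ℕ)) (A : Finset (Fin q)) :
    eLabel (σ ∪ τ) A = eLabel σ A ⊔ eLabel τ A :=
  sup_union

lemma eLabel_pair (a b : Fin q → ℕ) (A : Finset (Fin q)) :
    eLabel {a, b} A = (∑ i ∈ A, a i) ⊔ ∑ i ∈ A, b i := by
  simp [eLabel]

lemma eLabel_eq_of_forall_nonempty {σ τ : Finset (Fin q → ℕ)}
    (h : ∀ A : Finset (Fin q), A.Nonempty → eLabel τ A = eLabel σ A) (A : Finset (Fin q)) :
    eLabel τ A = eLabel σ A := by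
  rcases A.eq_empty_or_nonempty with rfl | hA
  · exact (sup_bot τ).trans (sup_bot σ).symm
  · exact h A hA

lemma mem_aUF {c x : Fin q → ℕ} :
    x ∈ aUF q r c ↔ (∀ i, c i ≤ x i ∧ x i ≤ c i + 1) ∧ ∑ i, x i = r := by
  simp [aUF, Pi.le_def, forall_and]

/-- The label at `{i}` bounds `a i` from above, the label at `{i}ᶜ` from below. -/
lemma subset_aUF_of_eLabel_eq {c : Fin q → ℕ} {σ τ : Finset (Fin q → ℕ)} (hσ : σ.Nonempty)
    (hσc : σ ⊆ aUF q r c) (hτr : ∀ a ∈ τ, ∑ i, a i = r)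
    (hlab : ∀ A : Finset (Fin q), eLabel τ A = eLabel σ A) : τ ⊆ aUF q r c := by
  intro a ha
  refine mem_aUF.2 ⟨fun i => ⟨?_, ?_⟩, hτr a ha⟩
  · obtain ⟨b, hb, hbl⟩ := exists_mem_eq_sup σ hσ (fun b => ∑ k ∈ {i}ᶜ, b k)
    have hle := sum_le_eLabel ha {i}ᶜ
    rw [hlab, eLabel, hbl] at hle
    have hcb := ((mem_aUF.1 (hσc hb)).1 i).1
    have hasum := Fintype.sum_eq_add_sum_compl i a
    have hbsum := Fintype.sum_eq_add_sum_compl i b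
    rw [hτr a ha] at hasum
    rw [(mem_aUF.1 (hσc hb)).2] at hbsum
    omega
  · have hle := sum_le_eLabel ha {i}
    rw [hlab, sum_singleton] at hle
    exact hle.trans (Finset.sup_le fun b hb => by simpa using ((mem_aUF.1 (hσc hb)).1 i).2)

/-- Test the label on the set `A` where `a = c + 1`: a vector of `cU` with maximal sum over `A`
must be `a`. -/
lemma mem_of_sum_le_eLabel {c a : Fin q → ℕ} {ρ : Finset (Fin q → ℕ)} (hρ : ρ.Nonempty)
    (hρc : ρ ⊆ aUF q r c) (ha : a ∈ aUF q r c)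
    (hlab : ∀ A : Finset (Fin q), ∑ i ∈ A, a i ≤ eLabel ρ A) : a ∈ ρ := by
  set A := univ.filter fun i => a i = c i + 1
  obtain ⟨b, hb, hbl⟩ := exists_mem_eq_sup ρ hρ (fun b => ∑ i ∈ A, b i)
  have ha' := mem_aUF.1 ha
  have hb' := mem_aUF.1 (hρc hb)
  suffices b = a from this ▸ hb
  refine eq_of_le_on_of_le_off (s := A) (fun i hi => ?_) (fun i hi => ?_)
    (hb'.2.trans ha'.2.symm) (hbl ▸ hlab A)
  · have := (mem_filter.1 hi).2
    have := (hb'.1 i).2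
    omega
  · have : a i ≠ c i + 1 := fun h => hi (mem_filter.2 ⟨mem_univ i, h⟩)
    have := ha'.1 i
    have := (hb'.1 i).1
    omega

lemma isScarf_of_subset_aUF {c : Fin q → ℕ} {σ : Finset (Fin q → ℕ)} (hσ : σ.Nonempty)
    (hσc : σ ⊆ aUF q r c) : IsScarf q r σ := by
  refine ⟨hσ, fun a ha => (mem_aUF.1 (hσc ha)).2, fun τ hτ hτr hlab => ?_⟩
  have hlab' := eLabel_eq_of_forall_nonempty hlab
  have hτc := subset_aUF_of_eLabel_eq hσ hσc hτr hlab'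
  refine Subset.antisymm (fun a ha => ?_) (fun a ha => ?_)
  · exact mem_of_sum_le_eLabel hσ hσc (hτc ha) fun A => hlab' A ▸ sum_le_eLabel ha A
  · exact mem_of_sum_le_eLabel hτ hτc (hσc ha) fun A => (hlab' A).symm ▸ sum_le_eLabel ha A

/-- Swapping `π` for `τ` inside `σ` keeps the label of `σ`, so the Scarf property of `σ`
forces `(σ \ π) ∪ τ = σ`. -/
lemma IsScarf.subset_of_eLabel_eq {σ π τ : Finset (Fin q → ℕ)} (h : IsScarf q r σ)
    (hπσ : π ⊆ σ) (hτ : τ.Nonempty) (hτr : ∀ a ∈ τ, ∑ i, a i = r)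
    (hlab : ∀ A : Finset (Fin q), A.Nonempty → eLabel τ A = eLabel π A) : π ⊆ τ ∧ τ ⊆ σ := by
  have hswap : σ \ π ∪ τ = σ := by
    refine h.2.2 _ (hτ.mono subset_union_right) (fun a ha => ?_) fun A hA => ?_
    · rcases mem_union.1 ha with ha | ha
      exacts [h.2.1 a (mem_sdiff.1 ha).1, hτr a ha]
    · rw [eLabel_union, hlab A hA, ← eLabel_union, sdiff_union_of_subset hπσ]
  refine ⟨fun a ha => ?_, hswap ▸ subset_union_right⟩
  have ha' : a ∈ σ \ π ∪ τ := by rw [hswap]; exact hπσ ha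
  exact (mem_union.1 ha').resolve_left fun h => (mem_sdiff.1 h).2 ha

lemma IsScarf.mono {σ π : Finset (Fin q → ℕ)} (h : IsScarf q r σ) (hπσ : π ⊆ σ)
    (hπ : π.Nonempty) : IsScarf q r π := by
  refine ⟨hπ, fun a ha => h.2.1 a (hπσ ha), fun τ hτ hτr hlab => ?_⟩
  obtain ⟨hπτ, hτσ⟩ := h.subset_of_eLabel_eq hπσ hτ hτr hlab
  exact Subset.antisymm
    (h.subset_of_eLabel_eq hτσ hπ (fun a ha => h.2.1 a (hπσ ha)) fun A hA => (hlab A hA).symm).1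
    hπτ

lemma not_isScarf_of_sum_le_eLabel {σ : Finset (Fin q → ℕ)} {d : Fin q → ℕ} (hd : d ∉ σ)
    (hdr : ∑ i, d i = r) (hle : ∀ A : Finset (Fin q), ∑ i ∈ A, d i ≤ eLabel σ A) :
    ¬ IsScarf q r σ := by
  rintro ⟨-, hσr, huniq⟩
  refine hd (huniq (insert d σ) (insert_nonempty d σ) (forall_mem_insert _ _ _ |>.2 ⟨hdr, hσr⟩)
    (fun A _ => by rw [eLabel_insert, sup_eq_right.2 (hle A)]) ▸ mem_insert_self d σ)

lemma not_isScarf_pair_of_between {a b d : Fin q → ℕ} (ha : ∑ i, a i = r) (hb : ∑ i, b i = r)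
    (hd : ∀ A : Finset (Fin q), ∑ i ∈ A, d i ∈ Set.uIcc (∑ i ∈ A, b i) (∑ i ∈ A, a i))
    (hda : d ≠ a) (hdb : d ≠ b) : ¬ IsScarf q r {a, b} := by
  refine not_isScarf_of_sum_le_eLabel (d := d) (by simp [hda, hdb]) ?_ fun A => ?_
  · simpa [ha, hb] using hd univ
  · rw [eLabel_pair, sup_comm]
    exact (hd A).2

end Scarf

lemma exists_nat_sum_mem_uIcc_of_int {ι : Type*} {a b : ι → ℕ} {w : ι → ℤ}
    (hw : ∀ A : Finset ι, ∑ k ∈ A, w k ∈ Set.uIcc 0 (∑ k ∈ A, ((a k : ℤ) - b k))) :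
    ∃ d : ι → ℕ, (∀ k, (d k : ℤ) = b k + w k) ∧
      ∀ A : Finset ι, ∑ k ∈ A, d k ∈ Set.uIcc (∑ k ∈ A, b k) (∑ k ∈ A, a k) := by
  have hd : ∀ k, ((b k + w k).toNat : ℤ) = b k + w k := fun k => Int.toNat_of_nonneg <| by
    have := hw {k}
    simp only [sum_singleton, Set.mem_uIcc] at this
    omega
  refine ⟨fun k => (b k + w k).toNat, hd, fun A => ?_⟩
  have hA := hw A
  have hcast : ((∑ k ∈ A, (b k + w k).toNat : ℕ) : ℤ) = ∑ k ∈ A, (b k : ℤ) + ∑ k ∈ A, w k := by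
    push_cast [hd]
    exact sum_add_distrib
  have hacast : ((∑ k ∈ A, a k : ℕ) : ℤ) = ∑ k ∈ A, (a k : ℤ) := Nat.cast_sum _ _
  have hbcast : ((∑ k ∈ A, b k : ℕ) : ℤ) = ∑ k ∈ A, (b k : ℤ) := Nat.cast_sum _ _
  rw [sum_sub_distrib, Set.mem_uIcc] at hA
  simp only [Set.mem_uIcc]
  omega

lemma IsScarf.apply_le_add_one {q r : ℕ} (hq : q ≤ 4) {a b : Fin q → ℕ}
    (h : IsScarf q r {a, b}) (i : Fin q) : a i ≤ b i + 1 := by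
  by_contra! hi
  have ha := h.2.1 a (by simp)
  have hb := h.2.1 b (by simp)
  set v : Fin q → ℤ := fun k => (a k : ℤ) - b k with hv_def
  have hv : ∑ k, v k = 0 := by
    have : ∑ k, (a k : ℤ) = ∑ k, (b k : ℤ) := by exact_mod_cast ha.trans hb.symm
    rw [hv_def, sum_sub_distrib, this, sub_self]
  obtain ⟨w, hw0, hwv, hw⟩ := exists_sum_mem_uIcc_of_card_le_four (by simpa using hq) hv
    (i := i) (by simp only [hv_def]; omega)
  obtain ⟨d, hdw, hd⟩ := exists_nat_sum_mem_uIcc_of_int hw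
  refine not_isScarf_pair_of_between ha hb hd (fun hda => hwv ?_) (fun hdb => hw0 ?_) h <;>
    funext k <;> have := hdw k
  · rw [hda] at this
    simp only [hv_def]
    omega
  · rw [hdb] at this
    simp only [Pi.zero_apply]
    omega

theorem stmt14_general (q r : ℕ) (hq4 : q ≤ 4)
    (σ : Finset (Fin q → ℕ)) (hσ : σ.Nonempty) (hσr : ∀ a ∈ σ, ∑ i, a i = r) :
    (IsScarf q r σ ↔ ∀ a ∈ σ, ∀ b ∈ σ, IsScarf q r {a, b}) ∧
    (IsScarf q r σ ↔ ∀ a ∈ σ, ∀ b ∈ σ, ∀ i, a i ≤ b i + 1 ∧ b i ≤ a i + 1) ∧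
    (IsScarf q r σ ↔ σ ⊆ aUF q r (fun i => σ.inf' hσ (fun a => a i))) := by
  have h12 : IsScarf q r σ → ∀ a ∈ σ, ∀ b ∈ σ, IsScarf q r {a, b} := fun h a ha b hb =>
    h.mono (insert_subset ha (singleton_subset_iff.2 hb)) (insert_nonempty a {b})
  have h23 : (∀ a ∈ σ, ∀ b ∈ σ, IsScarf q r {a, b}) →
      ∀ a ∈ σ, ∀ b ∈ σ, ∀ i, a i ≤ b i + 1 ∧ b i ≤ a i + 1 := fun h a ha b hb i =>
    ⟨(h a ha b hb).apply_le_add_one hq4 i, (pair_comm a b ▸ h a ha b hb).apply_le_add_one hq4 i⟩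
  have h34 : (∀ a ∈ σ, ∀ b ∈ σ, ∀ i, a i ≤ b i + 1 ∧ b i ≤ a i + 1) →
      σ ⊆ aUF q r (fun i => σ.inf' hσ (fun a => a i)) := by
    intro h a ha
    refine mem_aUF.2 ⟨fun i => ⟨inf'_le _ ha, ?_⟩, hσr a ha⟩
    obtain ⟨b, hb, hbi⟩ := exists_mem_eq_inf' hσ (fun a => a i)
    exact hbi ▸ (h a ha b hb i).1
  have h41 : σ ⊆ aUF q r (fun i => σ.inf' hσ (fun a => a i)) → IsScarf q r σ :=
    isScarf_of_subset_aUF hσ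
  exact ⟨⟨h12, h41 ∘ h34 ∘ h23⟩, ⟨h23 ∘ h12, h41 ∘ h34⟩, ⟨h34 ∘ h23 ∘ h12, h41⟩⟩

/-- Proposition (p:U=Scarf): for `1 ≤ q ≤ 4` and a nonempty `σ ⊆ N^r_q`, the
following are equivalent: (1) `σ` is a Scarf face of `E_q^r`; (2) all pairs
`{a, b}` with `a, b ∈ σ` are Scarf faces; (3) `|a i - b i| ≤ 1` for all
`a, b ∈ σ` and all `i`; (4) `σ ⊆ cU` where `c i = min_{a ∈ σ} a i`. -/
theorem stmt14 (q r : ℕ) (hq1 : 1 ≤ q) (hq4 : q ≤ 4) (hr : 1 ≤ r)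
    (σ : Finset (Fin q → ℕ)) (hσ : σ.Nonempty) (hσr : ∀ a ∈ σ, ∑ i, a i = r) :
    (IsScarf q r σ ↔ ∀ a ∈ σ, ∀ b ∈ σ, IsScarf q r {a, b}) ∧
    (IsScarf q r σ ↔ ∀ a ∈ σ, ∀ b ∈ σ, ∀ i, a i ≤ b i + 1 ∧ b i ≤ a i + 1) ∧
    (IsScarf q r σ ↔ σ ⊆ aUF q r (fun i => σ.inf' hσ (fun a => a i))) :=
  stmt14_general q r hq4 σ hσ hσr
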